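/- (Levi–Moser identity.) Let q ∈ ℂ[[t]] and let φ be a formal power series in z, z̄ with φ = z + z̄ + O₃ (so φ_z has constant term 1 and is invertible). Set h = ∂₁₂S_q(φ⁻,φ)·φ_z·φ_z⁻. Then for every formal power series w in z, z̄: ∂_φℰ(q,φ)(w)·φ_z = ∂_z(ℰ(q,φ))·w + ∇⁺( h · ∇(w/φ_z) ). -/

import Mathlib

/- Common setup: formal power series in two commuting variables `z, z̄` over `ℂ`,
represented by their coefficient functions, together with the operators of
Treschev's linearizable billiard construction. -/

open scoped BigOperators

noncomputable section

namespace Treschev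

/-- A formal power series `f = Σ_{j,k≥0} f_{j,k} z^j z̄^k`, given by its coefficients. -/
abbrev FPS : Type := ℕ → ℕ → ℂ

/-- A formal power series in one variable `t`, given by its coefficients. -/
abbrev OPS : Type := ℕ → ℂ

/-- Product of two formal power series (Cauchy product). -/
def fmul (f g : FPS) : FPS := fun j k =>
  ∑ a ∈ Finset.range (j + 1), ∑ b ∈ Finset.range (k + 1), f a b * g (j - a) (k - b)

/-- The constant series `1`. -/
def oneF : FPS := fun j k => if j = 0 ∧ k = 0 then 1 else 0

/-- Powers of a formal power series. -/
def fpow (f : FPS) : ℕ → FPS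
  | 0 => oneF
  | n + 1 => fmul f (fpow f n)

/-- Substitution of a two-variable series `u` with zero constant term into a
one-variable series `q` (the formula is the correct one whenever `u 0 0 = 0`). -/
def substOne (q : OPS) (u : FPS) : FPS := fun j k =>
  ∑ m ∈ Finset.range (j + k + 1), q m * fpow u m j k

/-- Substitution `F(u, v)` of two series with zero constant term into a two-variable
series `F` (the formula is the correct one whenever `u 0 0 = 0` and `v 0 0 = 0`). -/
def subst2 (F : FPS) (u v : FPS) : FPS := fun j k =>
  ∑ m ∈ Finset.range (j + k + 1), ∑ n ∈ Finset.range (j + k + 1),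
    F m n * fmul (fpow u m) (fpow v n) j k

/-- The Taylor series of `cos`. -/
def cosSeries : OPS := fun n => if n % 2 = 0 then (-1 : ℂ) ^ (n / 2) / (n.factorial : ℂ) else 0

/-- `(t₁ + t₂)/2` as a two-variable series. -/
def halfSum : FPS := fun j k =>
  if j = 1 ∧ k = 0 then (1 / 2 : ℂ) else if j = 0 ∧ k = 1 then (1 / 2 : ℂ) else 0

/-- `(t₁ − t₂)/2` as a two-variable series. -/
def halfDiff : FPS := fun j k =>
  if j = 1 ∧ k = 0 then (1 / 2 : ℂ) else if j = 0 ∧ k = 1 then (-(1 / 2) : ℂ) else 0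

/-- The generating function `S_q(t₁,t₂) = q((t₁+t₂)/2)·cos((t₁−t₂)/2)` as a
formal power series in `t₁, t₂`. -/
def Sq (q : OPS) : FPS := fmul (substOne q halfSum) (substOne cosSeries halfDiff)

/-- Formal partial derivative with respect to the first variable. -/
def d1 (f : FPS) : FPS := fun j k => ((j + 1 : ℕ) : ℂ) * f (j + 1) k

/-- Formal partial derivative with respect to the second variable. -/
def d2 (f : FPS) : FPS := fun j k => ((k + 1 : ℕ) : ℂ) * f j (k + 1)

/-- `f⁺`, with `(f⁺)_{j,k} = λ^{j−k} f_{j,k}`. -/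
def plus (l : ℂ) (f : FPS) : FPS := fun j k => l ^ ((j : ℤ) - (k : ℤ)) * f j k

/-- `f⁻`, with `(f⁻)_{j,k} = λ^{k−j} f_{j,k}`. -/
def minus (l : ℂ) (f : FPS) : FPS := fun j k => l ^ ((k : ℤ) - (j : ℤ)) * f j k

/-- `∇f = f⁻ − λ⁻¹ f`. -/
def nab (l : ℂ) (f : FPS) : FPS := minus l f - l⁻¹ • f

/-- `∇⁺f = f − λ f⁺`. -/
def nabPlus (l : ℂ) (f : FPS) : FPS := f - l • plus l f

/-- The average `[f] = Σ_j f_{j,j} (z z̄)^j`. -/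
def avg (f : FPS) : FPS := fun j k => if j = k then f j k else 0

/-- The projection `Π₊(f) = [z f]/z`. -/
def Pip (f : FPS) : FPS := fun j k => if k = j + 1 then f j k else 0

/-- The projection `Π(f) = [z̄ f]/z̄`. -/
def Pim (f : FPS) : FPS := fun j k => if j = k + 1 then f j k else 0

/-- `E⁺`, the partial inverse of `∇⁺`. -/
def Eplus (l : ℂ) (f : FPS) : FPS := fun j k =>
  if k = j + 1 then 0 else f j k / (1 - l ^ ((j : ℤ) - (k : ℤ) + 1))

/-- `E`, the partial inverse of `∇`. -/
def Emin (l : ℂ) (f : FPS) : FPS := fun j k =>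
  if j = k + 1 then 0 else f j k / (l ^ ((k : ℤ) - (j : ℤ)) - l⁻¹)

/-- `Ẽ`, with `Ẽ(f − f⁺) = f − [f]`. -/
def Etilde (l : ℂ) (f : FPS) : FPS := fun j k =>
  if j = k then 0 else f j k / (1 - l ^ ((j : ℤ) - (k : ℤ)))

/-- `f ∘ I`, where `I(z,z̄) = (z̄,z)`. -/
def swapI (f : FPS) : FPS := fun j k => f k j

/-- Multiplication by `z`. -/
def mulz (f : FPS) : FPS := fun j k => if j = 0 then 0 else f (j - 1) k

/-- Multiplication by `z̄`. -/
def mulzbar (f : FPS) : FPS := fun j k => if k = 0 then 0 else f j (k - 1)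

/-- Division by `z` (valid on series divisible by `z`). -/
def divz (f : FPS) : FPS := fun j k => f (j + 1) k

/-- Multiplicative inverse `1/h` (the geometric-series formula, which is the correct
inverse whenever `h 0 0 ≠ 0`). -/
def finv (h : FPS) : FPS := fun j k =>
  (h 0 0)⁻¹ * ∑ m ∈ Finset.range (j + k + 1),
    fpow (fun a b => if a = 0 ∧ b = 0 then 0 else -(h a b) * (h 0 0)⁻¹) m j k

/-- Quotient `f/h` of formal power series. -/
def fdiv (f h : FPS) : FPS := fmul f (finv h)

/-- `ℰ(q,φ) = ∂₂S_q(φ⁻,φ) + ∂₁S_q(φ,φ⁺)`. -/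
def Err (l : ℂ) (q : OPS) (φ : FPS) : FPS :=
  subst2 (d2 (Sq q)) (minus l φ) φ + subst2 (d1 (Sq q)) φ (plus l φ)

/-- `∂_φℰ(q,φ)(w) = ∂₁₂S_q(φ⁻,φ)w⁻ + ∂₂₂S_q(φ⁻,φ)w + ∂₁₁S_q(φ,φ⁺)w + ∂₁₂S_q(φ,φ⁺)w⁺`. -/
def dErr (l : ℂ) (q : OPS) (φ : FPS) (w : FPS) : FPS :=
  fmul (subst2 (d1 (d2 (Sq q))) (minus l φ) φ) (minus l w)
    + fmul (subst2 (d2 (d2 (Sq q))) (minus l φ) φ) w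
    + fmul (subst2 (d1 (d1 (Sq q))) φ (plus l φ)) w
    + fmul (subst2 (d1 (d2 (Sq q))) φ (plus l φ)) (plus l w)

/-- `h = ∂₁₂S_q(φ⁻,φ)·φ_z·φ_z⁻`. -/
def hFun (l : ℂ) (q : OPS) (φ : FPS) : FPS :=
  fmul (fmul (subst2 (d1 (d2 (Sq q))) (minus l φ) φ) (d1 φ)) (minus l (d1 φ))

/-- `ψ = −E⁺( ℰ(q,φ)·φ_z − Π₊(ℰ(q,φ)·φ_z) )`. -/
def psiFun (l : ℂ) (q : OPS) (φ : FPS) : FPS :=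
  -Eplus l (fmul (Err l q φ) (d1 φ) - Pip (fmul (Err l q φ) (d1 φ)))

/-- `w = φ_z·E( ψ/h − Π(ψ/h) )`. -/
def wFun (l : ℂ) (q : OPS) (φ : FPS) : FPS :=
  fmul (d1 φ)
    (Emin l (fdiv (psiFun l q φ) (hFun l q φ) - Pim (fdiv (psiFun l q φ) (hFun l q φ))))

/-- `κ = ∂₁₂S_q(φ⁻,φ)·(λ⁻¹ φ_z⁻ φ_z̄ − λ φ_z̄⁻ φ_z)`. -/
def kappaFun (l : ℂ) (q : OPS) (φ : FPS) : FPS :=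
  fmul (subst2 (d1 (d2 (Sq q))) (minus l φ) φ)
    (l⁻¹ • fmul (minus l (d1 φ)) (d2 φ) - l • fmul (minus l (d2 φ)) (d1 φ))

/-- `g = φ_z̄ / φ_z`. -/
def gFun (φ : FPS) : FPS := fdiv (d2 φ) (d1 φ)

/-- `R₁ = ( −[z̄·ℰ·φ_z̄] + [z̄·g·[z·ℰ·φ_z]/z] ) / ( λ·z·[κ] )`. -/
def R1Fun (l : ℂ) (q : OPS) (φ : FPS) : FPS :=
  l⁻¹ • fmul (finv (avg (kappaFun l q φ)))
    (divz (-avg (mulzbar (fmul (Err l q φ) (d2 φ)))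
      + avg (mulzbar (fmul (gFun φ) (divz (avg (mulz (fmul (Err l q φ) (d1 φ)))))))))

/-- `R₂ = (1/z)·[ z̄·ψ·(λ⁻¹g − λg⁻)·([κ]−κ)/(κ·[κ]) ]`. -/
def R2Fun (l : ℂ) (q : OPS) (φ : FPS) : FPS :=
  divz (avg (mulzbar
    (fmul (fmul (psiFun l q φ) (l⁻¹ • gFun φ - l • minus l (gFun φ)))
      (fmul (avg (kappaFun l q φ) - kappaFun l q φ)
        (finv (fmul (kappaFun l q φ) (avg (kappaFun l q φ))))))))

/-- `R₃ = [z·∂_z(S_q(φ⁻,φ))]/z − ∇⁺( h·Π(ψ/h) )`. -/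
def R3Fun (l : ℂ) (q : OPS) (φ : FPS) : FPS :=
  Pip (d1 (subst2 (Sq q) (minus l φ) φ))
    - nabPlus l (fmul (hFun l q φ) (Pim (fdiv (psiFun l q φ) (hFun l q φ))))

/-- `R₄ = ∂_z(ℰ(q,φ))·(w/φ_z) + R₃/φ_z`. -/
def R4Fun (l : ℂ) (q : OPS) (φ : FPS) : FPS :=
  fmul (d1 (Err l q φ)) (fdiv (wFun l q φ) (d1 φ)) + fdiv (R3Fun l q φ) (d1 φ)

/-- `φ = z + z̄ + O₃`. -/
def normalized (φ : FPS) : Prop :=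
  φ 0 0 = 0 ∧ φ 1 0 = 1 ∧ φ 0 1 = 1 ∧ φ 2 0 = 0 ∧ φ 1 1 = 0 ∧ φ 0 2 = 0

/-- The weighted norm `‖f‖_ρ = Σ_{j,k} |f_{j,k}| ρ^{j+k} ∈ [0,∞]`. -/
def wnorm (ρ : ℝ) (f : FPS) : ENNReal :=
  ∑' p : ℕ × ℕ, ENNReal.ofReal (‖f p.1 p.2‖ * ρ ^ (p.1 + p.2))

/-- `D(f) = Σ_{n≥1} n f_n (z z̄)^n` for a series in `z z̄`. -/
def Dop (f : FPS) : FPS := fun j k => if j = k then (j : ℂ) * f j k else 0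

/-- `D̄(f − f₀) = Σ_{n≥1} (f_n/n) (z z̄)^n` for a series in `z z̄`. -/
def Dbar (f : FPS) : FPS := fun j k => if j = k ∧ j ≠ 0 then f j k / (j : ℂ) else 0

/-- The constant part `f₀` of a series. -/
def constPart (f : FPS) : FPS := fun j k => if j = 0 ∧ k = 0 then f 0 0 else 0

/-- `ξ₀ = ((λ⁻¹+1)z + (λ+1)z̄)/2`. -/
def xi0 (l : ℂ) : FPS := fun a b =>
  if a = 1 ∧ b = 0 then (l⁻¹ + 1) / 2 else if a = 0 ∧ b = 1 then (l + 1) / 2 else 0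


/-!
In `ℂ⟦z⟧⟦z̄⟧` (`toPS`, outer variable `z`) `fmul` is the product and `d1` is `∂_z`, and
`f ↦ f⁻` is a ring automorphism commuting with substitution, with inverse `f ↦ f⁺`.
Write `A = ∂₁₂S_q(φ⁻,φ)`, so that `A⁺ = ∂₁₂S_q(φ,φ⁺)`. By the chain rule,
`∂_zℰ = λ⁻¹ A φ_z⁻ + (∂₂₂S_q(φ⁻,φ) + ∂₁₁S_q(φ,φ⁺)) φ_z + λ A⁺ φ_z⁺`, and since `φ_z` is invertible,
`h ∇(w/φ_z) = A φ_z w⁻ − λ⁻¹ A φ_z⁻ w`. Applying `∇⁺` to the latter produces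
`A φ_z w⁻ + A⁺ φ_z w⁺` minus exactly the two off-diagonal terms of `∂_zℰ · w`, which leaves
`∂_φℰ(w) · φ_z`.
-/

open PowerSeries

section Algebra

open Finset.HasAntidiagonal

def toPS : FPS →ₗ[ℂ] ℂ⟦X⟧⟦X⟧ where
  toFun f := mk fun j => mk (f j)
  map_add' f g := by ext j k; simp
  map_smul' c f := by ext j k; simp

@[simp]
lemma coeff_coeff_toPS (f : FPS) (j k : ℕ) : coeff k (coeff j (toPS f)) = f j k := by
  simp [toPS]

lemma toPS_injective : Function.Injective toPS := fun f g h => by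
  funext j k
  rw [← coeff_coeff_toPS f, h, coeff_coeff_toPS]

lemma fmul_apply (f g : FPS) (j k : ℕ) :
    fmul f g j k = ∑ p ∈ antidiagonal j, ∑ r ∈ antidiagonal k,
      f p.1 r.1 * g p.2 r.2 := by
  rw [Finset.Nat.sum_antidiagonal_eq_sum_range_succ_mk]
  exact Finset.sum_congr rfl fun a _ =>
    (Finset.Nat.sum_antidiagonal_eq_sum_range_succ_mk (fun r => f a r.1 * g (j - a) r.2) k).symm

lemma toPS_fmul (f g : FPS) : toPS (fmul f g) = toPS f * toPS g := by
  ext j k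
  simp only [coeff_coeff_toPS, fmul_apply, coeff_mul, map_sum]

lemma toPS_oneF : toPS oneF = 1 := by
  ext j k
  rw [coeff_coeff_toPS]
  rcases eq_or_ne j 0 with rfl | hj
  · simp [oneF, coeff_one]
  · simp [oneF, coeff_one, hj]

lemma toPS_fpow (f : FPS) (m : ℕ) : toPS (fpow f m) = toPS f ^ m := by
  induction m with
  | zero => exact toPS_oneF
  | succ m ih => rw [fpow, toPS_fmul, ih, pow_succ']

lemma toPS_d1 (f : FPS) : toPS (d1 f) = d⁄dX ℂ⟦X⟧ (toPS f) := by
  ext j k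
  rw [coeff_coeff_toPS, coeff_derivative, show ((j : ℂ⟦X⟧) + 1) = C ((j : ℂ) + 1) by simp,
    coeff_mul_C, coeff_coeff_toPS, d1, mul_comm]
  push_cast
  rfl

lemma fmul_comm (f g : FPS) : fmul f g = fmul g f :=
  toPS_injective <| by rw [toPS_fmul, toPS_fmul, mul_comm]

lemma fmul_assoc (f g h : FPS) : fmul (fmul f g) h = fmul f (fmul g h) :=
  toPS_injective <| by simp only [toPS_fmul, mul_assoc]

lemma fmul_left_comm (f g h : FPS) : fmul f (fmul g h) = fmul g (fmul f h) :=
  toPS_injective <| by simp only [toPS_fmul, mul_left_comm]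

lemma fmul_right_comm (f g h : FPS) : fmul (fmul f g) h = fmul (fmul f h) g :=
  toPS_injective <| by simp only [toPS_fmul, mul_right_comm]

lemma fmul_oneF (f : FPS) : fmul f oneF = f :=
  toPS_injective <| by rw [toPS_fmul, toPS_oneF, mul_one]

lemma fmul_sub (f g h : FPS) : fmul f (g - h) = fmul f g - fmul f h :=
  toPS_injective <| by simp only [toPS_fmul, map_sub, mul_sub]

lemma smul_fmul (c : ℂ) (f g : FPS) : fmul (c • f) g = c • fmul f g :=
  toPS_injective <| by simp only [toPS_fmul, map_smul, smul_mul_assoc]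

lemma fmul_smul (c : ℂ) (f g : FPS) : fmul f (c • g) = c • fmul f g :=
  toPS_injective <| by simp only [toPS_fmul, map_smul, mul_smul_comm]

lemma sum_fmul {ι : Type*} (s : Finset ι) (f : ι → FPS) (g : FPS) :
    fmul (∑ i ∈ s, f i) g = ∑ i ∈ s, fmul (f i) g :=
  toPS_injective <| by simp only [toPS_fmul, map_sum, Finset.sum_mul]

lemma d1_add (f g : FPS) : d1 (f + g) = d1 f + d1 g :=
  toPS_injective <| by simp only [toPS_d1, map_add]

lemma d1_fmul (f g : FPS) : d1 (fmul f g) = fmul (d1 f) g + fmul f (d1 g) :=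
  toPS_injective <| by simp only [toPS_d1, toPS_fmul, map_add, Derivation.leibniz, smul_eq_mul]; ring

lemma d1_fpow_succ (u : FPS) (m : ℕ) :
    d1 (fpow u (m + 1)) = ((m + 1 : ℕ) : ℂ) • fmul (fpow u m) (d1 u) :=
  toPS_injective <| by
    rw [toPS_d1, toPS_fpow, map_smul, toPS_fmul, toPS_fpow, toPS_d1, derivative_pow,
      Nat.cast_smul_eq_nsmul, nsmul_eq_mul, Nat.add_sub_cancel, mul_assoc]

lemma d1_oneF : d1 oneF = 0 := by
  funext j k
  simp [d1, oneF]

lemma d1_d2_comm (f : FPS) : d1 (d2 f) = d2 (d1 f) := by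
  funext j k
  simp only [d1, d2]
  ring

lemma fmul_apply_congr {f f' g g' : FPS} {j k : ℕ}
    (hf : ∀ a b, a ≤ j → b ≤ k → f a b = f' a b) (hg : ∀ a b, a ≤ j → b ≤ k → g a b = g' a b) :
    fmul f g j k = fmul f' g' j k := by
  simp only [fmul_apply]
  refine Finset.sum_congr rfl fun p hp => Finset.sum_congr rfl fun r hr => ?_
  rw [mem_antidiagonal] at hp hr
  rw [hf _ _ (by omega) (by omega), hg _ _ (by omega) (by omega)]

end Algebra

section Twist

open Finset.HasAntidiagonal

variable {l : ℂ}

lemma minus_fmul (hl : l ≠ 0) (f g : FPS) :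
    minus l (fmul f g) = fmul (minus l f) (minus l g) := by
  funext j k
  simp only [minus, fmul_apply, Finset.mul_sum]
  refine Finset.sum_congr rfl fun p hp => Finset.sum_congr rfl fun r hr => ?_
  rw [mem_antidiagonal] at hp hr
  rw [show (k : ℤ) - j = (r.1 - p.1 : ℤ) + (r.2 - p.2) by omega, zpow_add₀ hl]
  ring

lemma minus_oneF : minus l oneF = oneF := by
  funext j k
  by_cases h : j = 0 ∧ k = 0
  · simp [minus, oneF, h.1, h.2]
  · simp [minus, oneF, h]

lemma minus_fpow (hl : l ≠ 0) (f : FPS) (m : ℕ) :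
    minus l (fpow f m) = fpow (minus l f) m := by
  induction m with
  | zero => exact minus_oneF
  | succ m ih => rw [fpow, minus_fmul hl, ih, fpow]

lemma minus_subst2 (hl : l ≠ 0) (F u v : FPS) :
    minus l (subst2 F u v) = subst2 F (minus l u) (minus l v) := by
  funext j k
  simp only [subst2, ← minus_fpow hl, ← minus_fmul hl]
  simp only [minus, subst2, Finset.mul_sum, mul_left_comm]

lemma d1_minus (hl : l ≠ 0) (f : FPS) : d1 (minus l f) = l⁻¹ • minus l (d1 f) := by
  funext j k
  simp only [d1, minus, Pi.smul_apply, smul_eq_mul]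
  rw [show (k : ℤ) - ((j + 1 : ℕ) : ℤ) = -1 + (k - j) by push_cast; ring, zpow_add₀ hl,
    zpow_neg_one]
  ring

lemma plus_eq_minus_inv (f : FPS) : plus l f = minus l⁻¹ f := by
  funext j k
  simp only [plus, minus, inv_zpow, ← zpow_neg, neg_sub]

lemma plus_minus (hl : l ≠ 0) (f : FPS) : plus l (minus l f) = f := by
  funext j k
  simp only [plus, minus, ← mul_assoc, ← zpow_add₀ hl, sub_add_sub_cancel, sub_self, zpow_zero,
    one_mul]

lemma plus_fmul (hl : l ≠ 0) (f g : FPS) : plus l (fmul f g) = fmul (plus l f) (plus l g) := by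
  simp only [plus_eq_minus_inv, minus_fmul (inv_ne_zero hl)]

lemma plus_subst2 (hl : l ≠ 0) (F u v : FPS) :
    plus l (subst2 F u v) = subst2 F (plus l u) (plus l v) := by
  simp only [plus_eq_minus_inv, minus_subst2 (inv_ne_zero hl)]

lemma d1_plus (hl : l ≠ 0) (f : FPS) : d1 (plus l f) = l • plus l (d1 f) := by
  simp only [plus_eq_minus_inv, d1_minus (inv_ne_zero hl), inv_inv]

lemma plus_sub (f g : FPS) : plus l (f - g) = plus l f - plus l g := by
  funext j k
  simp only [plus, Pi.sub_apply, mul_sub]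

lemma plus_smul (c : ℂ) (f : FPS) : plus l (c • f) = c • plus l f := by
  funext j k
  simp only [plus, Pi.smul_apply, smul_eq_mul, mul_left_comm]

end Twist

section Substitution

open Finset

/-- `f = O_N` in the paper's notation. -/
def IsO (N : ℕ) (f : FPS) : Prop := ∀ j k, j + k < N → f j k = 0

lemma isO_zero (f : FPS) : IsO 0 f := fun _ _ h => absurd h (Nat.not_lt_zero _)

lemma IsO.mul {r s : ℕ} {f g : FPS} (hf : IsO r f) (hg : IsO s g) : IsO (r + s) (fmul f g) := by
  intro j k h
  refine sum_eq_zero fun a ha => sum_eq_zero fun b hb => ?_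
  rw [mem_range] at ha hb
  by_cases hab : a + b < r
  · rw [hf a b hab, zero_mul]
  · rw [hg (j - a) (k - b) (by omega), mul_zero]

lemma isO_fpow {u : FPS} (hu : u 0 0 = 0) (m : ℕ) : IsO m (fpow u m) := by
  induction m with
  | zero => exact isO_zero _
  | succ m ih =>
    have hu1 : IsO 1 u := fun j k h => by
      obtain ⟨rfl, rfl⟩ : j = 0 ∧ k = 0 := by omega
      exact hu
    have := hu1.mul ih
    rwa [Nat.add_comm] at this

lemma sum_range_sum_range_eq_of_le {t : ℕ → ℕ → ℂ} {N M : ℕ} (hNM : N ≤ M)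
    (ht : ∀ m n, N ≤ m + n → t m n = 0) :
    ∑ m ∈ range M, ∑ n ∈ range M, t m n = ∑ m ∈ range N, ∑ n ∈ range N, t m n := by
  have hsub := range_subset_range.mpr hNM
  rw [← sum_subset hsub fun m _ hm => sum_eq_zero fun n _ => ht m n (by simp at hm; omega)]
  exact sum_congr rfl fun m _ =>
    (sum_subset hsub fun n _ hn => ht m n (by simp at hn; omega)).symm

variable {u v : FPS}

lemma subst2_apply_eq_sum (hu : u 0 0 = 0) (hv : v 0 0 = 0) (F : FPS) {j k M : ℕ}
    (h : j + k < M) :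
    subst2 F u v j k = ∑ m ∈ range M, ∑ n ∈ range M, F m n * fmul (fpow u m) (fpow v n) j k := by
  rw [subst2, sum_range_sum_range_eq_of_le h fun m n hmn => by
    rw [(isO_fpow hu m).mul (isO_fpow hv n) j k (by omega), mul_zero]]

lemma fmul_subst2_apply (hu : u 0 0 = 0) (hv : v 0 0 = 0) (F w : FPS) {j k M : ℕ}
    (h : j + k < M) :
    fmul (subst2 F u v) w j k
      = ∑ m ∈ range M, ∑ n ∈ range M, F m n * fmul (fmul (fpow u m) (fpow v n)) w j k := by
  have htrunc : fmul (subst2 F u v) w j k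
      = fmul (∑ m ∈ range M, ∑ n ∈ range M, F m n • fmul (fpow u m) (fpow v n)) w j k :=
    fmul_apply_congr (fun a b ha hb => by
      simp only [Finset.sum_apply, Pi.smul_apply, smul_eq_mul]
      exact subst2_apply_eq_sum hu hv F (by omega)) fun _ _ _ _ => rfl
  simp only [htrunc, sum_fmul, smul_fmul, Finset.sum_apply, Pi.smul_apply, smul_eq_mul]

lemma d1_subst2_apply (hu : u 0 0 = 0) (hv : v 0 0 = 0) (F : FPS) {j k M : ℕ}
    (h : j + k + 1 < M) :
    d1 (subst2 F u v) j k = ∑ m ∈ range M, ∑ n ∈ range M,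
      F m n * (fmul (d1 (fpow u m)) (fpow v n) j k + fmul (fpow u m) (d1 (fpow v n)) j k) := by
  rw [d1, subst2_apply_eq_sum hu hv F (j := j + 1) (k := k) (M := M) (by omega), mul_sum]
  refine sum_congr rfl fun m _ => ?_
  rw [mul_sum]
  refine sum_congr rfl fun n _ => ?_
  rw [← Pi.add_apply, ← Pi.add_apply, ← d1_fmul, d1]
  ring

/-- The shift `m ↦ m + 1` behind `∂_z F(u, v) = ∂₁F(u, v) u_z`; the top term it drops is
`O_N` with `N > j + k`. -/
lemma sum_mul_fmul_d1_fpow (hu : u 0 0 = 0) (hv : v 0 0 = 0) (F : FPS) {j k N : ℕ}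
    (h : j + k < N) :
    ∑ m ∈ range (N + 1), ∑ n ∈ range (N + 1), F m n * fmul (d1 (fpow u m)) (fpow v n) j k
      = ∑ m ∈ range (N + 1), ∑ n ∈ range (N + 1),
          d1 F m n * fmul (fmul (fpow u m) (fpow v n)) (d1 u) j k := by
  have hbottom : ∑ n ∈ range (N + 1), F 0 n * fmul (d1 (fpow u 0)) (fpow v n) j k = 0 :=
    sum_eq_zero fun n _ => by simp [fpow, d1_oneF, fmul]
  have htop : ∑ n ∈ range (N + 1), d1 F N n * fmul (fmul (fpow u N) (fpow v n)) (d1 u) j k = 0 :=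
    sum_eq_zero fun n _ => by
      rw [((isO_fpow hu N).mul (isO_fpow hv n)).mul (isO_zero _) j k (by omega), mul_zero]
  rw [sum_range_succ', hbottom, add_zero]
  conv_rhs => rw [sum_range_succ, htop, add_zero]
  refine sum_congr rfl fun m _ => sum_congr rfl fun n _ => ?_
  rw [d1_fpow_succ, smul_fmul, fmul_right_comm]
  simp only [d1, Pi.smul_apply, smul_eq_mul]
  ring

lemma sum_mul_fmul_fpow_d1 (hu : u 0 0 = 0) (hv : v 0 0 = 0) (F : FPS) {j k N : ℕ}
    (h : j + k < N) :
    ∑ m ∈ range (N + 1), ∑ n ∈ range (N + 1), F m n * fmul (fpow u m) (d1 (fpow v n)) j k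
      = ∑ m ∈ range (N + 1), ∑ n ∈ range (N + 1),
          d2 F m n * fmul (fmul (fpow u m) (fpow v n)) (d1 v) j k := by
  calc _ = ∑ n ∈ range (N + 1), ∑ m ∈ range (N + 1),
          swapI F n m * fmul (d1 (fpow v n)) (fpow u m) j k := by
        rw [sum_comm]
        simp only [swapI, fmul_comm (fpow u _)]
    _ = ∑ n ∈ range (N + 1), ∑ m ∈ range (N + 1),
          d1 (swapI F) n m * fmul (fmul (fpow v n) (fpow u m)) (d1 v) j k :=
        sum_mul_fmul_d1_fpow hv hu _ h
    _ = _ := by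
        rw [sum_comm]
        simp only [fmul_comm (fpow v _)]
        rfl

theorem d1_subst2 (hu : u 0 0 = 0) (hv : v 0 0 = 0) (F : FPS) :
    d1 (subst2 F u v) = fmul (subst2 (d1 F) u v) (d1 u) + fmul (subst2 (d2 F) u v) (d1 v) := by
  funext j k
  have hN : j + k < j + k + 1 := Nat.lt_succ_self _
  rw [Pi.add_apply, Pi.add_apply, d1_subst2_apply hu hv F (M := j + k + 1 + 1) (by omega),
    fmul_subst2_apply hu hv _ _ (M := j + k + 1 + 1) (by omega),
    fmul_subst2_apply hu hv _ _ (M := j + k + 1 + 1) (by omega),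
    ← sum_mul_fmul_d1_fpow hu hv F hN, ← sum_mul_fmul_fpow_d1 hu hv F hN]
  simp only [mul_add, sum_add_distrib]

end Substitution

section Inverse

open Finset

lemma fmul_oneF_sub_geom {g : FPS} (hg : g 0 0 = 0) :
    fmul (oneF - g) (fun j k => ∑ m ∈ range (j + k + 1), fpow g m j k) = oneF := by
  funext j k
  have htrunc : fmul (oneF - g) (fun j k => ∑ m ∈ range (j + k + 1), fpow g m j k) j k
      = fmul (oneF - g) (∑ m ∈ range (j + k + 1), fpow g m) j k :=
    fmul_apply_congr (fun _ _ _ _ => rfl) fun a b ha hb => by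
      rw [Finset.sum_apply, Finset.sum_apply]
      exact sum_subset (range_subset_range.mpr (by omega)) fun m _ hm =>
        isO_fpow hg m a b (by simp at hm; omega)
  have hgeom : fmul (oneF - g) (∑ m ∈ range (j + k + 1), fpow g m) = oneF - fpow g (j + k + 1) :=
    toPS_injective <| by
      simp only [toPS_fmul, map_sub, map_sum, toPS_oneF, toPS_fpow, mul_neg_geom_sum]
  rw [htrunc, hgeom, Pi.sub_apply, Pi.sub_apply, isO_fpow hg _ j k (by omega), sub_zero]

lemma fmul_finv {h : FPS} (h0 : h 0 0 ≠ 0) : fmul h (finv h) = oneF := by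
  set g : FPS := fun a b => if a = 0 ∧ b = 0 then 0 else -(h a b) * (h 0 0)⁻¹
  have hh : h = h 0 0 • (oneF - g) := by
    funext a b
    by_cases hab : a = 0 ∧ b = 0
    · simp [g, oneF, hab.1, hab.2]
    · simp [g, oneF, hab]
      field_simp
  calc fmul h (finv h)
      = fmul (h 0 0 • (oneF - g)) ((h 0 0)⁻¹ • fun j k => ∑ m ∈ range (j + k + 1), fpow g m j k) := by
        rw [← hh]
        rfl
    _ = oneF := by
        rw [smul_fmul, fmul_smul, smul_smul, mul_inv_cancel₀ h0, one_smul,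
          fmul_oneF_sub_geom (by simp [g])]

lemma fmul_fdiv_cancel {h : FPS} (h0 : h 0 0 ≠ 0) (w : FPS) : fmul h (fdiv w h) = w := by
  rw [fdiv, fmul_left_comm, fmul_finv h0, fmul_oneF]

end Inverse

lemma d1_Err {l : ℂ} (hl : l ≠ 0) (q : OPS) {φ : FPS} (hφ : φ 0 0 = 0) :
    d1 (Err l q φ)
      = l⁻¹ • fmul (subst2 (d1 (d2 (Sq q))) (minus l φ) φ) (minus l (d1 φ))
        + fmul (subst2 (d2 (d2 (Sq q))) (minus l φ) φ) (d1 φ)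
        + fmul (subst2 (d1 (d1 (Sq q))) φ (plus l φ)) (d1 φ)
        + l • fmul (subst2 (d1 (d2 (Sq q))) φ (plus l φ)) (plus l (d1 φ)) := by
  have hminus : minus l φ 0 0 = 0 := by simp [minus, hφ]
  have hplus : plus l φ 0 0 = 0 := by simp [plus, hφ]
  rw [Err, d1_add, d1_subst2 hminus hφ, d1_subst2 hφ hplus, d1_minus hl, d1_plus hl,
    fmul_smul, fmul_smul, ← d1_d2_comm]
  abel

lemma fmul_nab_fdiv {l : ℂ} (hl : l ≠ 0) {p : FPS} (hp : p 0 0 ≠ 0) (A w : FPS) :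
    fmul (fmul (fmul A p) (minus l p)) (nab l (fdiv w p))
      = fmul A (fmul p (minus l w)) - l⁻¹ • fmul A (fmul (minus l p) w) := by
  have hminus : fmul (minus l p) (minus l (fdiv w p)) = minus l w := by
    rw [← minus_fmul hl, fmul_fdiv_cancel hp]
  rw [nab, fmul_sub, fmul_smul, fmul_assoc _ (minus l p), hminus, fmul_assoc,
    fmul_right_comm _ p, fmul_assoc _ p, fmul_fdiv_cancel hp, fmul_assoc]

theorem levi_moser_general
    (l : ℂ) (hl : ‖l‖ = 1)
    (q : OPS) (φ : FPS) (hφ : normalized φ) (w : FPS) :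
    fmul (dErr l q φ w) (d1 φ) =
      fmul (d1 (Err l q φ)) w
        + nabPlus l (fmul (hFun l q φ) (nab l (fdiv w (d1 φ)))) := by
  have hl0 : l ≠ 0 := by
    rintro rfl
    simp at hl
  obtain ⟨hφ0, hφ1, -⟩ := hφ
  have hp : d1 φ 0 0 ≠ 0 := by simp [d1, hφ1]
  have hAplus : plus l (subst2 (d1 (d2 (Sq q))) (minus l φ) φ)
      = subst2 (d1 (d2 (Sq q))) φ (plus l φ) := by
    rw [plus_subst2 hl0, plus_minus hl0]
  have hll : algebraMap ℂ ℂ⟦X⟧⟦X⟧ l * algebraMap ℂ ℂ⟦X⟧⟦X⟧ l⁻¹ = 1 := by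
    rw [← map_mul, mul_inv_cancel₀ hl0, map_one]
  apply toPS_injective
  rw [nabPlus, hFun, fmul_nab_fdiv hl0 hp, d1_Err hl0 q hφ0, dErr]
  simp only [plus_sub, plus_smul, plus_fmul hl0, plus_minus hl0, hAplus, map_add, map_sub,
    map_smul, toPS_fmul]
  simp only [Algebra.smul_def]
  -- what remains is `(λ λ⁻¹ - 1) A⁺ φ_z w⁺`
  linear_combination -(toPS (subst2 (d1 (d2 (Sq q))) φ (plus l φ)) * toPS (d1 φ)
    * toPS (plus l w)) * hll

/-- (Levi–Moser identity) With `h = ∂₁₂S_q(φ⁻,φ)·φ_z·φ_z⁻`, for every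
formal power series `w`:
`∂_φℰ(q,φ)(w)·φ_z = ∂_z(ℰ(q,φ))·w + ∇⁺( h·∇(w/φ_z) )`. -/
theorem levi_moser
    (l : ℂ) (hl : ‖l‖ = 1) (hru : ∀ n : ℕ, 0 < n → l ^ n ≠ 1)
    (q : OPS) (φ : FPS) (hφ : normalized φ) (w : FPS) :
    fmul (dErr l q φ w) (d1 φ) =
      fmul (d1 (Err l q φ)) w
        + nabPlus l (fmul (hFun l q φ) (nab l (fdiv w (d1 φ)))) :=
  levi_moser_general l hl q φ hφ w

end Treschev

end
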